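/- Let (xᵢ, yᵢ) for i = 0, …, r be points in the first quadrant with x₀ < x₁ < ⋯ < xᵣ and y₀ > y₁ > ⋯ > yᵣ (vertices of a Newton polygon), and for 1 ≤ i ≤ r set aᵢ = y_{i-1} - yᵢ > 0, bᵢ = xᵢ - x_{i-1} > 0, τᵢ = bᵢ/aᵢ, and w(i) = (1 + τᵢ)/(xᵢ + yᵢ·τᵢ). Then w(i) - w(i+1) = (yᵢ - xᵢ)(τ_{i+1} - τᵢ)/((xᵢ + yᵢ·τᵢ)(xᵢ + yᵢ·τ_{i+1})) for 1 ≤ i ≤ r - 1. Moreover, assuming the points all have positive coordinates where needed (xᵢ + yᵢτᵢ > 0), the maximum of w(i) over 1 ≤ i ≤ r equals max(w(1), w(r)). -/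

import Mathlib

/-!
Write `Dᵢ(t) = xᵢ + yᵢ t`. Since `τᵢ₊₁` is the slope of the edge from vertex `i` to vertex `i + 1`,
the linear form `(x, y) ↦ x + τᵢ₊₁ y` takes the same value at both ends of that edge, so
`Dᵢ₊₁(τᵢ₊₁) = Dᵢ(τᵢ₊₁)`, and `w(i) - w(i+1)` is a difference of two fractions over the same
`xᵢ, yᵢ`, which gives the displayed formula. Its sign is that of `yᵢ - xᵢ`, which strictly
decreases in `i`: so `w` first decreases and then increases, and its maximum is at an endpoint.
-/

theorem one_add_div_sub_one_add_div {K : Type*} [Field K] {x y s t : K}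
    (hs : x + y * s ≠ 0) (ht : x + y * t ≠ 0) :
    (1 + s) / (x + y * s) - (1 + t) / (x + y * t) =
      (y - x) * (t - s) / ((x + y * s) * (x + y * t)) := by
  rw [div_sub_div _ _ hs ht]
  ring

theorem le_max_of_sub_succ_eq_mul_pos {K : Type*} [CommRing K] [LinearOrder K]
    [IsStrictOrderedRing K] {w g : ℕ → K} {m n : ℕ} (hg : AntitoneOn g (Set.Icc m n))
    (hstep : ∀ i, m ≤ i → i < n → ∃ c, 0 < c ∧ w i - w (i + 1) = g i * c)
    {i : ℕ} (hi : i ∈ Set.Icc m n) : w i ≤ max (w m) (w n) := by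
  rcases le_total 0 (g i) with hgi | hgi
  · refine le_max_of_le_left (antitoneOn_of_add_one_le Set.ordConnected_Icc ?_
      (Set.left_mem_Icc.2 hi.1) (Set.right_mem_Icc.2 hi.1) hi.1)
    intro j _ hj hj'
    obtain ⟨c, hc, hdiff⟩ := hstep j hj.1 (by grind)
    have hgj : 0 ≤ g j := hgi.trans (hg ⟨hj.1, by grind⟩ ⟨hi.1, hi.2⟩ hj.2)
    nlinarith
  · refine le_max_of_le_right (monotoneOn_of_le_add_one Set.ordConnected_Icc ?_
      (Set.left_mem_Icc.2 hi.2) (Set.right_mem_Icc.2 hi.2) hi.2)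
    intro j _ hj hj'
    obtain ⟨c, hc, hdiff⟩ := hstep j (by grind) (by grind)
    have hgj : g j ≤ 0 := (hg ⟨hi.1, hi.2⟩ ⟨by grind, by grind⟩ hj.1).trans hgi
    nlinarith

theorem Finset.sup'_Icc_eq_max_of_le {α : Type*} [LinearOrder α] {f : ℕ → α} {m n : ℕ}
    (h : (Finset.Icc m n).Nonempty) (hf : ∀ i ∈ Set.Icc m n, f i ≤ max (f m) (f n)) :
    (Finset.Icc m n).sup' h f = max (f m) (f n) := by
  have hmn : m ≤ n := Finset.nonempty_Icc.mp h
  refine le_antisymm (Finset.sup'_le _ _ fun i hi => hf i (by simpa using hi)) (max_le ?_ ?_)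
  · exact Finset.le_sup' f (by simp [hmn])
  · exact Finset.le_sup' f (by simp [hmn])

theorem stmt_2_general (r : ℕ) (hr : 1 ≤ r) (x y a b τ w : ℕ → ℝ)
    (hx : ∀ i, i < r → x i < x (i+1))
    (hy : ∀ i, i < r → y (i+1) < y i)
    (ha : ∀ i, 1 ≤ i → i ≤ r → a i = y (i-1) - y i)
    (hb : ∀ i, 1 ≤ i → i ≤ r → b i = x i - x (i-1))
    (hτ : ∀ i, 1 ≤ i → i ≤ r → τ i = b i / a i)
    (hτmono : ∀ i, 1 ≤ i → i < r → τ i < τ (i+1))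
    (hw : ∀ i, 1 ≤ i → i ≤ r → w i = (1 + τ i) / (x i + y i * τ i))
    (hden : ∀ i, 1 ≤ i → i ≤ r → 0 < x i + y i * τ i) :
    (∀ i, 1 ≤ i → i ≤ r - 1 →
      w i - w (i+1) = (y i - x i) * (τ (i+1) - τ i) /
        ((x i + y i * τ i) * (x i + y i * τ (i+1)))) ∧
    (Finset.Icc 1 r).sup' (Finset.nonempty_Icc.mpr hr) w = max (w 1) (w r) := by
  have hedge : ∀ i, 1 ≤ i → i < r → x (i+1) + y (i+1) * τ (i+1) = x i + y i * τ (i+1) := by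
    intro i h1 h2
    have hai : a (i+1) = y i - y (i+1) := ha (i+1) (by omega) h2
    have hbi : b (i+1) = x (i+1) - x i := hb (i+1) (by omega) h2
    have hslope : τ (i+1) * a (i+1) = b (i+1) := by
      rw [hτ (i+1) (by omega) h2, div_mul_cancel₀ _ (by linarith [hy i h2])]
    linear_combination -hbi - hslope + τ (i+1) * hai
  have hden' : ∀ i, 1 ≤ i → i < r → 0 < x i + y i * τ (i+1) := fun i h1 h2 =>
    hedge i h1 h2 ▸ hden (i+1) (by omega) h2
  have hdiff : ∀ i, 1 ≤ i → i < r → w i - w (i+1) = (y i - x i) * (τ (i+1) - τ i) /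
      ((x i + y i * τ i) * (x i + y i * τ (i+1))) := by
    intro i h1 h2
    rw [hw i h1 h2.le, hw (i+1) (by omega) h2, hedge i h1 h2]
    exact one_add_div_sub_one_add_div (hden i h1 h2.le).ne' (hden' i h1 h2).ne'
  refine ⟨fun i h1 h2 => hdiff i h1 (by omega), Finset.sup'_Icc_eq_max_of_le _ fun i hi => ?_⟩
  refine le_max_of_sub_succ_eq_mul_pos (g := fun i => y i - x i) ?_ (fun j h1 h2 => ?_) hi
  · refine (strictAntiOn_of_add_one_lt Set.ordConnected_Icc fun j _ _ hj' => ?_).antitoneOn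
    linarith [hx j (Set.mem_Icc.1 hj').2, hy j (Set.mem_Icc.1 hj').2]
  · refine ⟨_, div_pos (sub_pos.2 (hτmono j h1 h2)) (mul_pos (hden j h1 h2.le) (hden' j h1 h2)), ?_⟩
    rw [hdiff j h1 h2, mul_div_assoc]

theorem stmt_2 (r : ℕ) (hr : 1 ≤ r) (x y a b τ w : ℕ → ℝ)
    (hx : ∀ i, i < r → x i < x (i+1))
    (hy : ∀ i, i < r → y (i+1) < y i)
    (hxy0 : ∀ i, i ≤ r → 0 ≤ x i ∧ 0 ≤ y i)
    (ha : ∀ i, 1 ≤ i → i ≤ r → a i = y (i-1) - y i)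
    (hb : ∀ i, 1 ≤ i → i ≤ r → b i = x i - x (i-1))
    (hτ : ∀ i, 1 ≤ i → i ≤ r → τ i = b i / a i)
    (hτmono : ∀ i, 1 ≤ i → i < r → τ i < τ (i+1))
    (hw : ∀ i, 1 ≤ i → i ≤ r → w i = (1 + τ i) / (x i + y i * τ i))
    (hden : ∀ i, 1 ≤ i → i ≤ r → 0 < x i + y i * τ i) :
    (∀ i, 1 ≤ i → i ≤ r - 1 →
      w i - w (i+1) = (y i - x i) * (τ (i+1) - τ i) /
        ((x i + y i * τ i) * (x i + y i * τ (i+1)))) ∧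
    (Finset.Icc 1 r).sup' (Finset.nonempty_Icc.mpr hr) w = max (w 1) (w r) :=
  stmt_2_general r hr x y a b τ w hx hy ha hb hτ hτmono hw hden
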